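/- Let φ = (1+√5)/2 and V(x,y,z) = (φ²x² − y²)(φ²y² − z²)(φ²z² − x²). A point (x,y,z) with x² + y² + z² = 1 satisfies V(x,y,z) = (2+√5)/27 if and only if (x,y,z) belongs to the following set of exactly 20 points: the eight points (±1,±1,±1)/√3 with independent signs, and the twelve points (±1/φ, ±φ, 0)/√3, (±φ, 0, ±1/φ)/√3, (0, ±1/φ, ±φ)/√3 with independent signs. These are the centres of the 20 spherical triangles cut out on the unit sphere by the six planes φ²x² = y², φ²y² = z², φ²z² = x². -/
import Mathlib


/-- The golden ratio. -/
noncomputable def φ : ℝ := (1 + Real.sqrt 5) / 2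

/-- The degree-6 invariant of the icosahedral group. -/
noncomputable def V (x y z : ℝ) : ℝ :=
  (φ ^ 2 * x ^ 2 - y ^ 2) * (φ ^ 2 * y ^ 2 - z ^ 2) * (φ ^ 2 * z ^ 2 - x ^ 2)

/-- The 20 centres of the spherical triangles: the eight points `(±1,±1,±1)/√3` and the
twelve points `(±1/φ, ±φ, 0)/√3`, `(±φ, 0, ±1/φ)/√3`, `(0, ±1/φ, ±φ)/√3`. -/
noncomputable def triangleCentres : Set (ℝ × ℝ × ℝ) :=
  { (1/Real.sqrt 3, 1/Real.sqrt 3, 1/Real.sqrt 3),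
    (1/Real.sqrt 3, 1/Real.sqrt 3, -(1/Real.sqrt 3)),
    (1/Real.sqrt 3, -(1/Real.sqrt 3), 1/Real.sqrt 3),
    (1/Real.sqrt 3, -(1/Real.sqrt 3), -(1/Real.sqrt 3)),
    (-(1/Real.sqrt 3), 1/Real.sqrt 3, 1/Real.sqrt 3),
    (-(1/Real.sqrt 3), 1/Real.sqrt 3, -(1/Real.sqrt 3)),
    (-(1/Real.sqrt 3), -(1/Real.sqrt 3), 1/Real.sqrt 3),
    (-(1/Real.sqrt 3), -(1/Real.sqrt 3), -(1/Real.sqrt 3)),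
    (1/(φ * Real.sqrt 3), φ/Real.sqrt 3, 0),
    (1/(φ * Real.sqrt 3), -(φ/Real.sqrt 3), 0),
    (-(1/(φ * Real.sqrt 3)), φ/Real.sqrt 3, 0),
    (-(1/(φ * Real.sqrt 3)), -(φ/Real.sqrt 3), 0),
    (φ/Real.sqrt 3, 0, 1/(φ * Real.sqrt 3)),
    (φ/Real.sqrt 3, 0, -(1/(φ * Real.sqrt 3))),
    (-(φ/Real.sqrt 3), 0, 1/(φ * Real.sqrt 3)),
    (-(φ/Real.sqrt 3), 0, -(1/(φ * Real.sqrt 3))),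
    (0, 1/(φ * Real.sqrt 3), φ/Real.sqrt 3),
    (0, 1/(φ * Real.sqrt 3), -(φ/Real.sqrt 3)),
    (0, -(1/(φ * Real.sqrt 3)), φ/Real.sqrt 3),
    (0, -(1/(φ * Real.sqrt 3)), -(φ/Real.sqrt 3)) }

lemma mem01 : ((1/Real.sqrt 3, 1/Real.sqrt 3, 1/Real.sqrt 3) : ℝ×ℝ×ℝ) ∈ triangleCentres := by
  unfold triangleCentres
  exact Set.mem_insert _ _

lemma mem02 : ((1/Real.sqrt 3, 1/Real.sqrt 3, -(1/Real.sqrt 3)) : ℝ×ℝ×ℝ) ∈ triangleCentres := by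
  unfold triangleCentres
  exact Set.mem_insert_of_mem _ (Set.mem_insert _ _)

lemma mem03 : ((1/Real.sqrt 3, -(1/Real.sqrt 3), 1/Real.sqrt 3) : ℝ×ℝ×ℝ) ∈ triangleCentres := by
  unfold triangleCentres
  exact Set.mem_insert_of_mem _ (Set.mem_insert_of_mem _ (Set.mem_insert _ _))

lemma mem04 : ((1/Real.sqrt 3, -(1/Real.sqrt 3), -(1/Real.sqrt 3)) : ℝ×ℝ×ℝ) ∈ triangleCentres := by
  unfold triangleCentres
  exact Set.mem_insert_of_mem _ (Set.mem_insert_of_mem _ (Set.mem_insert_of_mem _ (Set.mem_insert _ _)))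

lemma mem05 : ((-(1/Real.sqrt 3), 1/Real.sqrt 3, 1/Real.sqrt 3) : ℝ×ℝ×ℝ) ∈ triangleCentres := by
  unfold triangleCentres
  exact Set.mem_insert_of_mem _ (Set.mem_insert_of_mem _ (Set.mem_insert_of_mem _ (Set.mem_insert_of_mem _ (Set.mem_insert _ _))))

lemma mem06 : ((-(1/Real.sqrt 3), 1/Real.sqrt 3, -(1/Real.sqrt 3)) : ℝ×ℝ×ℝ) ∈ triangleCentres := by
  unfold triangleCentres
  exact Set.mem_insert_of_mem _ (Set.mem_insert_of_mem _ (Set.mem_insert_of_mem _ (Set.mem_insert_of_mem _ (Set.mem_insert_of_mem _ (Set.mem_insert _ _)))))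

lemma mem07 : ((-(1/Real.sqrt 3), -(1/Real.sqrt 3), 1/Real.sqrt 3) : ℝ×ℝ×ℝ) ∈ triangleCentres := by
  unfold triangleCentres
  exact Set.mem_insert_of_mem _ (Set.mem_insert_of_mem _ (Set.mem_insert_of_mem _ (Set.mem_insert_of_mem _ (Set.mem_insert_of_mem _ (Set.mem_insert_of_mem _ (Set.mem_insert _ _))))))

lemma mem08 : ((-(1/Real.sqrt 3), -(1/Real.sqrt 3), -(1/Real.sqrt 3)) : ℝ×ℝ×ℝ) ∈ triangleCentres := by
  unfold triangleCentres
  exact Set.mem_insert_of_mem _ (Set.mem_insert_of_mem _ (Set.mem_insert_of_mem _ (Set.mem_insert_of_mem _ (Set.mem_insert_of_mem _ (Set.mem_insert_of_mem _ (Set.mem_insert_of_mem _ (Set.mem_insert _ _)))))))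

lemma mem09 : ((1/(φ * Real.sqrt 3), φ/Real.sqrt 3, 0) : ℝ×ℝ×ℝ) ∈ triangleCentres := by
  unfold triangleCentres
  exact Set.mem_insert_of_mem _ (Set.mem_insert_of_mem _ (Set.mem_insert_of_mem _ (Set.mem_insert_of_mem _ (Set.mem_insert_of_mem _ (Set.mem_insert_of_mem _ (Set.mem_insert_of_mem _ (Set.mem_insert_of_mem _ (Set.mem_insert _ _))))))))

lemma mem10 : ((1/(φ * Real.sqrt 3), -(φ/Real.sqrt 3), 0) : ℝ×ℝ×ℝ) ∈ triangleCentres := by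
  unfold triangleCentres
  exact Set.mem_insert_of_mem _ (Set.mem_insert_of_mem _ (Set.mem_insert_of_mem _ (Set.mem_insert_of_mem _ (Set.mem_insert_of_mem _ (Set.mem_insert_of_mem _ (Set.mem_insert_of_mem _ (Set.mem_insert_of_mem _ (Set.mem_insert_of_mem _ (Set.mem_insert _ _)))))))))

lemma mem11 : ((-(1/(φ * Real.sqrt 3)), φ/Real.sqrt 3, 0) : ℝ×ℝ×ℝ) ∈ triangleCentres := by
  unfold triangleCentres
  exact Set.mem_insert_of_mem _ (Set.mem_insert_of_mem _ (Set.mem_insert_of_mem _ (Set.mem_insert_of_mem _ (Set.mem_insert_of_mem _ (Set.mem_insert_of_mem _ (Set.mem_insert_of_mem _ (Set.mem_insert_of_mem _ (Set.mem_insert_of_mem _ (Set.mem_insert_of_mem _ (Set.mem_insert _ _))))))))))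

lemma mem12 : ((-(1/(φ * Real.sqrt 3)), -(φ/Real.sqrt 3), 0) : ℝ×ℝ×ℝ) ∈ triangleCentres := by
  unfold triangleCentres
  exact Set.mem_insert_of_mem _ (Set.mem_insert_of_mem _ (Set.mem_insert_of_mem _ (Set.mem_insert_of_mem _ (Set.mem_insert_of_mem _ (Set.mem_insert_of_mem _ (Set.mem_insert_of_mem _ (Set.mem_insert_of_mem _ (Set.mem_insert_of_mem _ (Set.mem_insert_of_mem _ (Set.mem_insert_of_mem _ (Set.mem_insert _ _)))))))))))

lemma mem13 : ((φ/Real.sqrt 3, 0, 1/(φ * Real.sqrt 3)) : ℝ×ℝ×ℝ) ∈ triangleCentres := by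
  unfold triangleCentres
  exact Set.mem_insert_of_mem _ (Set.mem_insert_of_mem _ (Set.mem_insert_of_mem _ (Set.mem_insert_of_mem _ (Set.mem_insert_of_mem _ (Set.mem_insert_of_mem _ (Set.mem_insert_of_mem _ (Set.mem_insert_of_mem _ (Set.mem_insert_of_mem _ (Set.mem_insert_of_mem _ (Set.mem_insert_of_mem _ (Set.mem_insert_of_mem _ (Set.mem_insert _ _))))))))))))

lemma mem14 : ((φ/Real.sqrt 3, 0, -(1/(φ * Real.sqrt 3))) : ℝ×ℝ×ℝ) ∈ triangleCentres := by
  unfold triangleCentres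
  exact Set.mem_insert_of_mem _ (Set.mem_insert_of_mem _ (Set.mem_insert_of_mem _ (Set.mem_insert_of_mem _ (Set.mem_insert_of_mem _ (Set.mem_insert_of_mem _ (Set.mem_insert_of_mem _ (Set.mem_insert_of_mem _ (Set.mem_insert_of_mem _ (Set.mem_insert_of_mem _ (Set.mem_insert_of_mem _ (Set.mem_insert_of_mem _ (Set.mem_insert_of_mem _ (Set.mem_insert _ _)))))))))))))

lemma mem15 : ((-(φ/Real.sqrt 3), 0, 1/(φ * Real.sqrt 3)) : ℝ×ℝ×ℝ) ∈ triangleCentres := by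
  unfold triangleCentres
  exact Set.mem_insert_of_mem _ (Set.mem_insert_of_mem _ (Set.mem_insert_of_mem _ (Set.mem_insert_of_mem _ (Set.mem_insert_of_mem _ (Set.mem_insert_of_mem _ (Set.mem_insert_of_mem _ (Set.mem_insert_of_mem _ (Set.mem_insert_of_mem _ (Set.mem_insert_of_mem _ (Set.mem_insert_of_mem _ (Set.mem_insert_of_mem _ (Set.mem_insert_of_mem _ (Set.mem_insert_of_mem _ (Set.mem_insert _ _))))))))))))))

lemma mem16 : ((-(φ/Real.sqrt 3), 0, -(1/(φ * Real.sqrt 3))) : ℝ×ℝ×ℝ) ∈ triangleCentres := by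
  unfold triangleCentres
  exact Set.mem_insert_of_mem _ (Set.mem_insert_of_mem _ (Set.mem_insert_of_mem _ (Set.mem_insert_of_mem _ (Set.mem_insert_of_mem _ (Set.mem_insert_of_mem _ (Set.mem_insert_of_mem _ (Set.mem_insert_of_mem _ (Set.mem_insert_of_mem _ (Set.mem_insert_of_mem _ (Set.mem_insert_of_mem _ (Set.mem_insert_of_mem _ (Set.mem_insert_of_mem _ (Set.mem_insert_of_mem _ (Set.mem_insert_of_mem _ (Set.mem_insert _ _)))))))))))))))

lemma mem17 : ((0, 1/(φ * Real.sqrt 3), φ/Real.sqrt 3) : ℝ×ℝ×ℝ) ∈ triangleCentres := by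
  unfold triangleCentres
  exact Set.mem_insert_of_mem _ (Set.mem_insert_of_mem _ (Set.mem_insert_of_mem _ (Set.mem_insert_of_mem _ (Set.mem_insert_of_mem _ (Set.mem_insert_of_mem _ (Set.mem_insert_of_mem _ (Set.mem_insert_of_mem _ (Set.mem_insert_of_mem _ (Set.mem_insert_of_mem _ (Set.mem_insert_of_mem _ (Set.mem_insert_of_mem _ (Set.mem_insert_of_mem _ (Set.mem_insert_of_mem _ (Set.mem_insert_of_mem _ (Set.mem_insert_of_mem _ (Set.mem_insert _ _))))))))))))))))

lemma mem18 : ((0, 1/(φ * Real.sqrt 3), -(φ/Real.sqrt 3)) : ℝ×ℝ×ℝ) ∈ triangleCentres := by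
  unfold triangleCentres
  exact Set.mem_insert_of_mem _ (Set.mem_insert_of_mem _ (Set.mem_insert_of_mem _ (Set.mem_insert_of_mem _ (Set.mem_insert_of_mem _ (Set.mem_insert_of_mem _ (Set.mem_insert_of_mem _ (Set.mem_insert_of_mem _ (Set.mem_insert_of_mem _ (Set.mem_insert_of_mem _ (Set.mem_insert_of_mem _ (Set.mem_insert_of_mem _ (Set.mem_insert_of_mem _ (Set.mem_insert_of_mem _ (Set.mem_insert_of_mem _ (Set.mem_insert_of_mem _ (Set.mem_insert_of_mem _ (Set.mem_insert _ _)))))))))))))))))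

lemma mem19 : ((0, -(1/(φ * Real.sqrt 3)), φ/Real.sqrt 3) : ℝ×ℝ×ℝ) ∈ triangleCentres := by
  unfold triangleCentres
  exact Set.mem_insert_of_mem _ (Set.mem_insert_of_mem _ (Set.mem_insert_of_mem _ (Set.mem_insert_of_mem _ (Set.mem_insert_of_mem _ (Set.mem_insert_of_mem _ (Set.mem_insert_of_mem _ (Set.mem_insert_of_mem _ (Set.mem_insert_of_mem _ (Set.mem_insert_of_mem _ (Set.mem_insert_of_mem _ (Set.mem_insert_of_mem _ (Set.mem_insert_of_mem _ (Set.mem_insert_of_mem _ (Set.mem_insert_of_mem _ (Set.mem_insert_of_mem _ (Set.mem_insert_of_mem _ (Set.mem_insert_of_mem _ (Set.mem_insert _ _))))))))))))))))))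

lemma mem20 : ((0, -(1/(φ * Real.sqrt 3)), -(φ/Real.sqrt 3)) : ℝ×ℝ×ℝ) ∈ triangleCentres := by
  unfold triangleCentres
  exact Set.mem_insert_of_mem _ (Set.mem_insert_of_mem _ (Set.mem_insert_of_mem _ (Set.mem_insert_of_mem _ (Set.mem_insert_of_mem _ (Set.mem_insert_of_mem _ (Set.mem_insert_of_mem _ (Set.mem_insert_of_mem _ (Set.mem_insert_of_mem _ (Set.mem_insert_of_mem _ (Set.mem_insert_of_mem _ (Set.mem_insert_of_mem _ (Set.mem_insert_of_mem _ (Set.mem_insert_of_mem _ (Set.mem_insert_of_mem _ (Set.mem_insert_of_mem _ (Set.mem_insert_of_mem _ (Set.mem_insert_of_mem _ (Set.mem_insert_of_mem _ (rfl)))))))))))))))))))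

/-! ### Auxiliary facts about the golden ratio -/

lemma phi_sq : φ ^ 2 = φ + 1 := by
  have h5 : Real.sqrt 5 ^ 2 = 5 := Real.sq_sqrt (by norm_num)
  rw [φ]; nlinarith [h5]

lemma phi_two_mul : 2 * φ = 1 + Real.sqrt 5 := by rw [φ]; ring

lemma phi_lo : 1.6 < φ := by
  have h5 : Real.sqrt 5 ^ 2 = 5 := Real.sq_sqrt (by norm_num)
  have h0 : 0 ≤ Real.sqrt 5 := Real.sqrt_nonneg 5
  rw [φ]; nlinarith [h5, h0]

lemma phi_hi : φ < 1.7 := by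
  have h5 : Real.sqrt 5 ^ 2 = 5 := Real.sq_sqrt (by norm_num)
  have h0 : 0 ≤ Real.sqrt 5 := Real.sqrt_nonneg 5
  rw [φ]; nlinarith [h5, h0]

lemma phi_pos : 0 < φ := by linarith [phi_lo]

/-! ### Values of the squares of the coordinates of the centres -/

lemma sq_one : (1/Real.sqrt 3) ^ 2 = (1:ℝ)/3 := by
  rw [div_pow, one_pow, Real.sq_sqrt (by norm_num : (0:ℝ) ≤ 3)]

lemma sq_phi : (φ/Real.sqrt 3) ^ 2 = (φ + 1)/3 := by
  rw [div_pow, Real.sq_sqrt (by norm_num : (0:ℝ) ≤ 3), phi_sq]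

lemma sq_inv_phi : (1/(φ * Real.sqrt 3)) ^ 2 = (2 - φ)/3 := by
  have h3 : Real.sqrt 3 ^ 2 = 3 := Real.sq_sqrt (by norm_num)
  have hp : (0:ℝ) < φ := phi_pos
  have hs : (0:ℝ) < Real.sqrt 3 := Real.sqrt_pos.mpr (by norm_num)
  rw [div_pow, one_pow, mul_pow, h3]
  rw [div_eq_div_iff (by positivity) (by norm_num)]
  linear_combination (3*φ - 3) * phi_sq

/-! ### Values of V at the centres -/

lemma V8 (x y z : ℝ) (hx : x^2 = 1/3) (hy : y^2 = 1/3) (hz : z^2 = 1/3) :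
    V x y z = (2 + Real.sqrt 5) / 27 := by
  simp only [V]; rw [hx, hy, hz]
  linear_combination ((2:ℝ)/27 - (1/27)*φ^2 + (1/27)*φ^3 + (1/27)*φ^4) * phi_sq
    + (1/27 : ℝ) * phi_two_mul

lemma V12a (x y z : ℝ) (hx : x^2 = (2-φ)/3) (hy : y^2 = (φ+1)/3) (hz : z^2 = 0) :
    V x y z = (2 + Real.sqrt 5) / 27 := by
  simp only [V]; rw [hx, hy, hz]
  linear_combination ((1:ℝ)/27 + (1/27)*φ - (2/27)*φ^2 + (2/27)*φ^4 - (1/27)*φ^5) * phi_sq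
    + (1/27 : ℝ) * phi_two_mul

lemma V12b (x y z : ℝ) (hx : x^2 = (φ+1)/3) (hy : y^2 = 0) (hz : z^2 = (2-φ)/3) :
    V x y z = (2 + Real.sqrt 5) / 27 := by
  simp only [V]; rw [hx, hy, hz]
  linear_combination ((1:ℝ)/27 + (1/27)*φ - (2/27)*φ^2 + (2/27)*φ^4 - (1/27)*φ^5) * phi_sq
    + (1/27 : ℝ) * phi_two_mul

lemma V12c (x y z : ℝ) (hx : x^2 = 0) (hy : y^2 = (2-φ)/3) (hz : z^2 = (φ+1)/3) :
    V x y z = (2 + Real.sqrt 5) / 27 := by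
  simp only [V]; rw [hx, hy, hz]
  linear_combination ((1:ℝ)/27 + (1/27)*φ - (2/27)*φ^2 + (2/27)*φ^4 - (1/27)*φ^5) * phi_sq
    + (1/27 : ℝ) * phi_two_mul

/-! ### Key algebraic lemmas -/

lemma pm_of_sq_eq {x t : ℝ} (h : x^2 = t^2) : x = t ∨ x = -t := by
  have h0 : (x - t) * (x + t) = 0 := by linear_combination h
  rcases mul_eq_zero.mp h0 with h' | h'
  · left; linarith
  · right; linarith

lemma cubident (g w : ℝ) (hg : g^2 = g+1) :
    (7-4*g)*(g^3/27 - (1-(g+2)*w)*w*(g + (1-(g+2)*w) + w)) =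
    (g+1)*(g+2)*(w-(2-g)/3)^2*(g/3-(7-4*g)*w) := by
  linear_combination ((7/9)*w - (7/3)*w^2 + (8/27)*g + (16/9)*g*w - 5*g*w^2 - (4/27)*g^2
    + (5/9)*g^2*w - (8/3)*g^2*w^2 - (1/27)*g^3 - (4/9)*g^3*w) * hg

lemma amgm_eq (g A B C : ℝ) (hg0 : 0 < g) (hA : 0 < A) (hB : 0 < B) (hC : 0 < C)
    (hsum : A + B + C = g) (hprod : A * B * C = g^3/27) :
    A = g/3 ∧ B = g/3 ∧ C = g/3 := by
  obtain rfl : g = A + B + C := hsum.symm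
  have h1 : (A-B)^2 = 0 := by
    nlinarith [sq_nonneg (B-C), sq_nonneg (C-A), sq_nonneg (A-B),
      mul_nonneg hC.le (sq_nonneg (A-B)), mul_nonneg hA.le (sq_nonneg (B-C)),
      mul_nonneg hB.le (sq_nonneg (C-A))]
  have h2 : (B-C)^2 = 0 := by
    nlinarith [sq_nonneg (C-A), sq_nonneg (A-B),
      mul_nonneg hC.le (sq_nonneg (A-B)), mul_nonneg hA.le (sq_nonneg (B-C)),
      mul_nonneg hB.le (sq_nonneg (C-A))]
  have e1 : A = B := by nlinarith [h1]
  have e2 : B = C := by nlinarith [h2]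
  refine ⟨by linarith, by linarith, by linarith⟩

set_option maxHeartbeats 1000000 in
lemma twoNegCore (g u w cc : ℝ) (hg : g^2 = g+1) (hlo : 1.6 < g) (hhi : g < 1.7)
    (hu : 0 < u) (hw : 0 < w) (hcc : 0 ≤ cc)
    (hlin : u + (g+2)*w + cc = 1) (hkey : u*w*(g+u+w) = g^3/27) :
    w = (2-g)/3 ∧ u = g/3 ∧ cc = 0 := by
  have h74 : (0:ℝ) < 7-4*g := by linarith
  have hle : u ≤ 1-(g+2)*w := by linarith
  have hu' : (0:ℝ) < 1-(g+2)*w := lt_of_lt_of_le hu hle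
  have hpos : 0 ≤ w*((1-(g+2)*w) - u)*(g + u + (1-(g+2)*w) + w) :=
    mul_nonneg (mul_nonneg hw.le (by linarith)) (by linarith)
  have hmono : u*w*(g+u+w) ≤ (1-(g+2)*w)*w*(g + (1-(g+2)*w) + w) := by nlinarith [hpos]
  have hP : 0 < g/3 - (7-4*g)*w := by nlinarith [mul_pos h74 hu']
  have hident := cubident g w hg
  have hub : (1-(g+2)*w)*w*(g + (1-(g+2)*w) + w) ≤ g^3/27 := by
    nlinarith [hident, mul_nonneg (sq_nonneg (w-(2-g)/3)) hP.le]
  have heq1 : (1-(g+2)*w)*w*(g + (1-(g+2)*w) + w) = g^3/27 :=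
    le_antisymm hub (hkey ▸ hmono)
  have h0 : (g+1)*(g+2)*(w-(2-g)/3)^2*(g/3-(7-4*g)*w) = 0 := by
    linear_combination -hident - (7-4*g)*heq1
  have hsq : (w-(2-g)/3)^2 ≤ 0 := by
    nlinarith [mul_pos (show (0:ℝ) < (g+1)*(g+2) by nlinarith) hP, h0]
  have hW : w = (2-g)/3 := by
    have h2 : (w-(2-g)/3)^2 = 0 := le_antisymm hsq (sq_nonneg _)
    have := pow_eq_zero_iff (two_ne_zero) |>.mp h2
    linarith
  have h2 : w*((1-(g+2)*w) - u)*(g + u + (1-(g+2)*w) + w) = 0 := by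
    linear_combination heq1 - hkey
  have h3 : (1-(g+2)*w) - u ≤ 0 := by
    nlinarith [mul_pos hw (show (0:ℝ) < g + u + (1-(g+2)*w) + w by linarith), h2]
  have hcc0 : cc = 0 := by linarith
  have hgw : (g+2)*w = (3-g)/3 := by rw [hW]; linear_combination (-1/3 : ℝ)*hg
  exact ⟨hW, by linarith, hcc0⟩

lemma twoNeg (g a b c : ℝ) (hg : g^2 = g+1) (hlo : 1.6 < g) (hhi : g < 1.7)
    (hc : 0 ≤ c)
    (hA : g^2*a - b < 0) (hC : g^2*c - a < 0) (hsum : a + b + c = 1)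
    (hprod : (g^2*a-b)*(g^2*b-c)*(g^2*c-a) = g^3/27) :
    a = (2-g)/3 ∧ b = (g+1)/3 ∧ c = 0 := by
  have hu : 0 < b - g^2*a := by linarith
  have hw : 0 < a - g^2*c := by linarith
  have hcc : 0 ≤ (4*g+4)*c := mul_nonneg (by linarith) hc
  have hlin : (b - g^2*a) + (g+2)*(a - g^2*c) + (4*g+4)*c = 1 := by
    linear_combination hsum - (a + (g+3)*c)*hg
  have hkey : (b-g^2*a)*(a-g^2*c)*(g + (b-g^2*a) + (a-g^2*c)) = g^3/27 := by
    linear_combination hprod - ((b-g^2*a)*(a-g^2*c))*hg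
      - ((b-g^2*a)*(a-g^2*c))*(g^2-1)*hsum
  obtain ⟨hW, hU, hC0⟩ := twoNegCore g (b-g^2*a) (a-g^2*c) ((4*g+4)*c)
    hg hlo hhi hu hw hcc hlin hkey
  have hc0 : c = 0 := by
    rcases mul_eq_zero.mp hC0 with h | h
    · nlinarith
    · exact h
  subst hc0
  have ha : a = (2-g)/3 := by
    have h' : a - g^2*0 = (2-g)/3 := hW
    linarith [h', sq_nonneg g]
  exact ⟨ha, by linarith, rfl⟩

set_option maxHeartbeats 1000000 in
lemma sqCase (g a b c : ℝ) (hg : g^2 = g+1) (hlo : 1.6 < g) (hhi : g < 1.7)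
    (ha : 0 ≤ a) (hb : 0 ≤ b) (hc : 0 ≤ c) (hsum : a + b + c = 1)
    (hprod : (g^2*a-b)*(g^2*b-c)*(g^2*c-a) = g^3/27) :
    (a = 1/3 ∧ b = 1/3 ∧ c = 1/3) ∨ (a = (2-g)/3 ∧ b = (g+1)/3 ∧ c = 0) ∨
    (b = (2-g)/3 ∧ c = (g+1)/3 ∧ a = 0) ∨ (c = (2-g)/3 ∧ a = (g+1)/3 ∧ b = 0) := by
  have hg3 : (0:ℝ) < g^3/27 := by positivity
  have hsABC : (g^2*a-b) + (g^2*b-c) + (g^2*c-a) = g := by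
    linear_combination (g^2-1)*hsum + hg
  have hAne : g^2*a-b ≠ 0 := fun h => by rw [h] at hprod; simp at hprod; nlinarith
  have hBne : g^2*b-c ≠ 0 := fun h => by rw [h] at hprod; simp at hprod; nlinarith
  have hCne : g^2*c-a ≠ 0 := fun h => by rw [h] at hprod; simp at hprod; nlinarith
  rcases hAne.lt_or_gt with hA | hA <;> rcases hBne.lt_or_gt with hB | hB <;>
    rcases hCne.lt_or_gt with hC | hC
  · exfalso; linarith
  · exact Or.inr (Or.inr (Or.inl (twoNeg g b c a hg hlo hhi ha hB hA (by linarith)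
      (by linear_combination hprod))))
  · exact Or.inr (Or.inl (twoNeg g a b c hg hlo hhi hc hA hC hsum hprod))
  · exfalso; nlinarith [mul_pos hB hC]
  · exact Or.inr (Or.inr (Or.inr (twoNeg g c a b hg hlo hhi hb hC hB (by linarith)
      (by linear_combination hprod))))
  · exfalso; nlinarith [mul_pos hA hC]
  · exfalso; nlinarith [mul_pos hA hB]
  · obtain ⟨e1, e2, e3⟩ := amgm_eq g _ _ _ (by linarith) hA hB hC hsABC hprod
    left
    have h1 : g^2*(a-b) = b - c := by linear_combination e1 - e2
    have h2 : g^2*(b-c) = c - a := by linear_combination e2 - e3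
    have h3 : g^2*(c-a) = a - b := by linear_combination e3 - e1
    have hab : (g^6 - 1)*(a-b) = 0 := by linear_combination g^4*h1 + g^2*h2 + h3
    have hg6 : g^6 - 1 = 8*g+4 := by linear_combination (g^4+g^3+2*g^2+3*g+5)*hg
    have eab : a = b := by
      rcases mul_eq_zero.mp hab with h | h
      · linarith
      · linarith
    have ebc : b = c := by nlinarith [h1, eab]
    refine ⟨by linarith, by linarith, by linarith⟩

set_option maxHeartbeats 2000000 in
/-- A point of the unit sphere satisfies `V = (2+√5)/27` if and only if it is one of the
20 centres of the spherical triangles cut out by the six planes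
`φ²x² = y²`, `φ²y² = z²`, `φ²z² = x²`. -/
theorem stmt8 (x y z : ℝ) (h : x ^ 2 + y ^ 2 + z ^ 2 = 1) :
    V x y z = (2 + Real.sqrt 5) / 27 ↔ (x, y, z) ∈ triangleCentres := by
  constructor
  · intro hV
    have hg := phi_sq
    have hphi3 : φ^3 = 2 + Real.sqrt 5 := by
      linear_combination (φ+1)*phi_sq + phi_two_mul
    have hprod : (φ^2*x^2-y^2)*(φ^2*y^2-z^2)*(φ^2*z^2-x^2) = φ^3/27 := by
      rw [hphi3]; simpa [V] using hV
    have hcase := sqCase φ (x^2) (y^2) (z^2) hg phi_lo phi_hi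
      (sq_nonneg x) (sq_nonneg y) (sq_nonneg z) h hprod
    rcases hcase with ⟨hx, hy, hz⟩ | ⟨hx, hy, hz⟩ | ⟨hy, hz, hx⟩ | ⟨hz, hx, hy⟩
    · -- (±1,±1,±1)/√3
      have hx' := pm_of_sq_eq (show x^2 = (1/Real.sqrt 3)^2 by rw [sq_one]; exact hx)
      have hy' := pm_of_sq_eq (show y^2 = (1/Real.sqrt 3)^2 by rw [sq_one]; exact hy)
      have hz' := pm_of_sq_eq (show z^2 = (1/Real.sqrt 3)^2 by rw [sq_one]; exact hz)
      rcases hx' with rfl | rfl <;> rcases hy' with rfl | rfl <;> rcases hz' with rfl | rfl <;>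
        first
          | exact mem01 | exact mem02 | exact mem03 | exact mem04
          | exact mem05 | exact mem06 | exact mem07 | exact mem08
    · -- (±1/φ, ±φ, 0)/√3
      have hx' := pm_of_sq_eq (show x^2 = (1/(φ*Real.sqrt 3))^2 by rw [sq_inv_phi]; exact hx)
      have hy' := pm_of_sq_eq (show y^2 = (φ/Real.sqrt 3)^2 by rw [sq_phi]; exact hy)
      have hz' : z = 0 := pow_eq_zero_iff (two_ne_zero) |>.mp hz
      subst hz'
      rcases hx' with rfl | rfl <;> rcases hy' with rfl | rfl <;>
        first
          | exact mem09 | exact mem10 | exact mem11 | exact mem12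
    · -- (0, ±1/φ, ±φ)/√3
      have hy' := pm_of_sq_eq (show y^2 = (1/(φ*Real.sqrt 3))^2 by rw [sq_inv_phi]; exact hy)
      have hz' := pm_of_sq_eq (show z^2 = (φ/Real.sqrt 3)^2 by rw [sq_phi]; exact hz)
      have hx' : x = 0 := pow_eq_zero_iff (two_ne_zero) |>.mp hx
      subst hx'
      rcases hy' with rfl | rfl <;> rcases hz' with rfl | rfl <;>
        first
          | exact mem17 | exact mem18 | exact mem19 | exact mem20
    · -- (±φ, 0, ±1/φ)/√3
      have hz' := pm_of_sq_eq (show z^2 = (1/(φ*Real.sqrt 3))^2 by rw [sq_inv_phi]; exact hz)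
      have hx' := pm_of_sq_eq (show x^2 = (φ/Real.sqrt 3)^2 by rw [sq_phi]; exact hx)
      have hy' : y = 0 := pow_eq_zero_iff (two_ne_zero) |>.mp hy
      subst hy'
      rcases hx' with rfl | rfl <;> rcases hz' with rfl | rfl <;>
        first
          | exact mem13 | exact mem14 | exact mem15 | exact mem16
  · intro hmem
    simp only [triangleCentres, Set.mem_insert_iff, Set.mem_singleton_iff,
      Prod.mk.injEq] at hmem
    rcases hmem with ⟨rfl, rfl, rfl⟩ | ⟨rfl, rfl, rfl⟩ | ⟨rfl, rfl, rfl⟩ | ⟨rfl, rfl, rfl⟩ |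
      ⟨rfl, rfl, rfl⟩ | ⟨rfl, rfl, rfl⟩ | ⟨rfl, rfl, rfl⟩ | ⟨rfl, rfl, rfl⟩ |
      ⟨rfl, rfl, rfl⟩ | ⟨rfl, rfl, rfl⟩ | ⟨rfl, rfl, rfl⟩ | ⟨rfl, rfl, rfl⟩ |
      ⟨rfl, rfl, rfl⟩ | ⟨rfl, rfl, rfl⟩ | ⟨rfl, rfl, rfl⟩ | ⟨rfl, rfl, rfl⟩ |
      ⟨rfl, rfl, rfl⟩ | ⟨rfl, rfl, rfl⟩ | ⟨rfl, rfl, rfl⟩ | ⟨rfl, rfl, rfl⟩ <;>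
    first
      | exact V8 _ _ _ (by simpa [neg_sq] using sq_one) (by simpa [neg_sq] using sq_one)
          (by simpa [neg_sq] using sq_one)
      | exact V12a _ _ _ (by simpa [neg_sq] using sq_inv_phi) (by simpa [neg_sq] using sq_phi)
          (by norm_num)
      | exact V12b _ _ _ (by simpa [neg_sq] using sq_phi) (by norm_num)
          (by simpa [neg_sq] using sq_inv_phi)
      | exact V12c _ _ _ (by norm_num) (by simpa [neg_sq] using sq_inv_phi)
          (by simpa [neg_sq] using sq_phi)
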